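/- Let X be a smooth projective complex K3 surface and C ⊂ X a smooth ample curve of genus 6 (so C^2 = 10). There is no divisor D on X with D·C = 5 and D^2 = 2. -/
import Mathlib


/-- The divisor (Picard) lattice of a smooth projective complex K3 surface,
with the standard positivity and effectivity properties. -/
structure K3Lattice where
  /-- divisor classes on the K3 surface `X` -/
  Div : Type
  [grp : AddCommGroup Div]
  /-- the intersection pairing -/
  inter : Div → Div → ℤ
  inter_symm : ∀ A B, inter A B = inter B A
  inter_add : ∀ A B C, inter (A + B) C = inter A C + inter B C
  /-- the intersection form of a K3 surface is even -/
  inter_even : ∀ A, Even (inter A A)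
  Effective : Div → Prop
  Nef : Div → Prop
  Ample : Div → Prop
  BasePointFree : Div → Prop
  /-- the class of an irreducible curve -/
  IsIrreducibleCurve : Div → Prop
  /-- the class of a smooth curve -/
  IsSmoothCurve : Div → Prop
  /-- the class of a smooth elliptic curve -/
  IsEllipticCurve : Div → Prop
  /-- `h0 D` = dimension of `H⁰(X, O_X(D))` -/
  h0 : Div → ℕ
  /-- Hodge index theorem -/
  hodge : ∀ A B, 0 < inter A A → inter A A * inter B B ≤ inter A B ^ 2
  /-- Riemann–Roch on a K3: a `(-2)`-class is effective up to sign -/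
  riemannRoch : ∀ D, inter D D = -2 → Effective D ∨ Effective (-D)
  /-- an ample divisor meets every nonzero effective divisor positively -/
  ample_pos : ∀ C D, Ample C → Effective D → D ≠ 0 → 0 < inter C D
  /-- a nef divisor on a K3 has nonnegative self-intersection -/
  nef_nonneg : ∀ D, Nef D → 0 ≤ inter D D
  /-- base-point-free divisors are nef -/
  bpf_nef : ∀ D, BasePointFree D → Nef D

attribute [instance] K3Lattice.grp

namespace K3Lattice

lemma inter_add' (T : K3Lattice) (A B C : T.Div) :
    T.inter A (B + C) = T.inter A B + T.inter A C := by
  rw [T.inter_symm, T.inter_add, T.inter_symm B, T.inter_symm C]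

lemma inter_zero (T : K3Lattice) (A : T.Div) : T.inter 0 A = 0 := by
  have := T.inter_add 0 0 A
  simpa using this

lemma inter_neg (T : K3Lattice) (A B : T.Div) : T.inter (-A) B = -T.inter A B := by
  have := T.inter_add A (-A) B
  simp [T.inter_zero] at this
  linarith

lemma inter_sub (T : K3Lattice) (A B C : T.Div) :
    T.inter (A - B) C = T.inter A C - T.inter B C := by
  rw [sub_eq_add_neg, T.inter_add, T.inter_neg, sub_eq_add_neg]

lemma inter_zero' (T : K3Lattice) (A : T.Div) : T.inter A 0 = 0 := by
  rw [T.inter_symm, T.inter_zero]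

lemma inter_neg' (T : K3Lattice) (A B : T.Div) : T.inter A (-B) = -T.inter A B := by
  rw [T.inter_symm, T.inter_neg, T.inter_symm]

lemma inter_sub' (T : K3Lattice) (A B C : T.Div) :
    T.inter A (B - C) = T.inter A B - T.inter A C := by
  rw [T.inter_symm, T.inter_sub, T.inter_symm B, T.inter_symm C]

end K3Lattice

/-- Let `X` be a smooth projective complex K3 surface and `C ⊂ X` a smooth ample curve
of genus `6` (so `C² = 10`). There is no divisor `D` on `X` with `D·C = 5` and
`D² = 2`. -/
theorem no_divisor_with_square_two (T : K3Lattice) (C : T.Div)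
    (hCamp : T.Ample C) (hCsm : T.IsSmoothCurve C) (hCirr : T.IsIrreducibleCurve C)
    (hgenus : T.inter C C = 10) :
    ¬ ∃ D : T.Div, T.inter D C = 5 ∧ T.inter D D = 2 := by
  rintro ⟨D, hDC, hDD⟩
  set E := C - 2 • D with hE
  have h2D : T.inter (2 • D) C = 10 := by
    rw [two_smul, T.inter_add, T.inter_symm D C] at *
    omega
  have h2D2 : T.inter (2 • D) (2 • D) = 8 := by
    rw [two_smul, T.inter_add, T.inter_add']
    omega
  have hDC' : T.inter C (2 • D) = 10 := by rw [T.inter_symm]; exact h2D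
  have hEE : T.inter E E = -2 := by
    rw [hE, T.inter_sub, T.inter_sub', T.inter_sub']
    omega
  have hCE : T.inter C E = 0 := by
    rw [hE, T.inter_sub']
    omega
  have hEne : E ≠ 0 := by
    intro h
    rw [h, T.inter_zero] at hEE
    omega
  have hCnegE : T.inter C (-E) = 0 := by rw [T.inter_neg', hCE]; ring
  rcases T.riemannRoch E hEE with hEff | hEff
  · have := T.ample_pos C E hCamp hEff hEne
    omega
  · have := T.ample_pos C (-E) hCamp hEff (by simpa using hEne)
    omega
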